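/- Let k₁ and k₂ be relatively prime positive integers. The map ψ : H³(ℤ) × ℝ → H³(ℝ) × SU(2) defined by ψ(N, t) = (N · U(0, 0, k₂t), diag(e^{-2πik₁t}, e^{2πik₁t})) is a group homomorphism whose image equals the set H = { (U(a, b, c + k₂t), diag(e^{-2πik₁t}, e^{2πik₁t})) : a, b, c ∈ ℤ, t ∈ ℝ }. -/
import Mathlib


/-- The Heisenberg group over a commutative ring `R`: elements `U(x,y,z)` (upper unitriangular
3×3 matrices `[[1,x,z],[0,1,y],[0,0,1]]`) with the matrix multiplication law
`U(x,y,z)·U(x',y',z') = U(x+x', y+y', z+z'+x·y')`. -/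
@[ext]
structure Heis (R : Type*) [CommRing R] where
  x : R
  y : R
  z : R

namespace Heis

variable {R : Type*} [CommRing R]

instance : Mul (Heis R) := ⟨fun a b => ⟨a.x + b.x, a.y + b.y, a.z + b.z + a.x * b.y⟩⟩
instance : One (Heis R) := ⟨⟨0, 0, 0⟩⟩
instance : Inv (Heis R) := ⟨fun a => ⟨-a.x, -a.y, -a.z + a.x * a.y⟩⟩

@[simp] theorem mul_x (a b : Heis R) : (a * b).x = a.x + b.x := rfl
@[simp] theorem mul_y (a b : Heis R) : (a * b).y = a.y + b.y := rfl
@[simp] theorem mul_z (a b : Heis R) : (a * b).z = a.z + b.z + a.x * b.y := rfl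
@[simp] theorem one_x : (1 : Heis R).x = 0 := rfl
@[simp] theorem one_y : (1 : Heis R).y = 0 := rfl
@[simp] theorem one_z : (1 : Heis R).z = 0 := rfl
@[simp] theorem inv_x (a : Heis R) : (a⁻¹).x = -a.x := rfl
@[simp] theorem inv_y (a : Heis R) : (a⁻¹).y = -a.y := rfl
@[simp] theorem inv_z (a : Heis R) : (a⁻¹).z = -a.z + a.x * a.y := rfl

instance : Group (Heis R) where
  mul := (· * ·)
  one := 1
  inv := (·⁻¹)
  mul_assoc a b c := by ext <;> simp <;> ring
  one_mul a := by ext <;> simp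
  mul_one a := by ext <;> simp
  inv_mul_cancel a := by ext <;> simp <;> ring

@[simp] theorem mk_mul (a b c a' b' c' : R) :
    (⟨a, b, c⟩ * ⟨a', b', c'⟩ : Heis R) = ⟨a + a', b + b', c + c' + a * b'⟩ := rfl

theorem one_def : (1 : Heis R) = ⟨0, 0, 0⟩ := rfl

@[simp] theorem mk_inv (a b c : R) : (⟨a, b, c⟩ : Heis R)⁻¹ = ⟨-a, -b, -c + a * b⟩ := rfl

end Heis

namespace Heis

/-- The inclusion of the integer Heisenberg group `H³(ℤ)` into `H³(ℝ)`. -/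
def castHom : Heis ℤ →* Heis ℝ where
  toFun N := ⟨(N.x : ℝ), (N.y : ℝ), (N.z : ℝ)⟩
  map_one' := by ext <;> simp
  map_mul' a b := by ext <;> simp

end Heis

/-- `SU(2)`: the group of 2×2 complex special unitary matrices (unitary matrices of
determinant 1), as a subgroup of the unitary group. -/
def SU2 : Subgroup (Matrix.unitaryGroup (Fin 2) ℂ) where
  carrier := {A | (A : Matrix (Fin 2) (Fin 2) ℂ).det = 1}
  one_mem' := by simp
  mul_mem' {a b} ha hb := by
    simp only [Set.mem_setOf_eq, Matrix.UnitaryGroup.mul_val, Matrix.det_mul] at *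
    rw [ha, hb, mul_one]
  inv_mem' {a} ha := by
    simp only [Set.mem_setOf_eq, Matrix.UnitaryGroup.inv_val] at *
    show (star (a : Matrix (Fin 2) (Fin 2) ℂ)).det = 1
    rw [Matrix.star_eq_conjTranspose, Matrix.det_conjTranspose, ha, star_one]

/-- The element `diag(e^{-iθ}, e^{iθ})` of `SU(2)`. -/
noncomputable def su2diag (θ : ℝ) : SU2 := by
  refine ⟨⟨Matrix.diagonal
      ![Complex.exp (-(θ : ℂ) * Complex.I), Complex.exp ((θ : ℂ) * Complex.I)], ?_⟩, ?_⟩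
  · rw [Matrix.mem_unitaryGroup_iff, Matrix.star_eq_conjTranspose,
      Matrix.diagonal_conjTranspose, Matrix.diagonal_mul_diagonal]
    have hv : (fun i => ![Complex.exp (-(θ : ℂ) * Complex.I), Complex.exp ((θ : ℂ) * Complex.I)] i *
        star ![Complex.exp (-(θ : ℂ) * Complex.I), Complex.exp ((θ : ℂ) * Complex.I)] i) =
        (1 : Fin 2 → ℂ) := by
      funext i
      fin_cases i <;>
        simp [Complex.star_def, ← Complex.exp_conj, ← Complex.exp_add]
    rw [hv]
    exact Matrix.diagonal_one
  · show (Matrix.diagonal _).det = 1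
    rw [Matrix.det_diagonal, Fin.prod_univ_two]
    simp only [Matrix.cons_val_zero, Matrix.cons_val_one, Matrix.head_cons, ← Complex.exp_add]
    ring_nf
    exact Complex.exp_zero

/-- The subset `H = { (U(a,b,c+k₂t), diag(e^{-2πik₁t}, e^{2πik₁t})) : a,b,c ∈ ℤ, t ∈ ℝ }`
of `H³(ℝ) × SU(2)`. -/
noncomputable def Hset (k₁ k₂ : ℕ) : Set (Heis ℝ × SU2) :=
  {p | ∃ (a b c : ℤ) (t : ℝ),
    p = (⟨(a : ℝ), (b : ℝ), (c : ℝ) + (k₂ : ℝ) * t⟩, su2diag (2 * Real.pi * (k₁ : ℝ) * t))}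


lemma su2diag_zero : su2diag 0 = 1 := by
  apply Subtype.ext; apply Subtype.ext
  show (Matrix.diagonal _ : Matrix (Fin 2) (Fin 2) ℂ) = 1
  have : (![Complex.exp (-(0:ℝ) * Complex.I), Complex.exp ((0:ℝ) * Complex.I)]) =
      (1 : Fin 2 → ℂ) := by
    funext i; fin_cases i <;> simp
  rw [this]; exact Matrix.diagonal_one

lemma su2diag_add (θ θ' : ℝ) : su2diag (θ + θ') = su2diag θ * su2diag θ' := by
  apply Subtype.ext; apply Subtype.ext
  show (Matrix.diagonal _ : Matrix (Fin 2) (Fin 2) ℂ) = Matrix.diagonal _ * Matrix.diagonal _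
  rw [Matrix.diagonal_mul_diagonal]
  ext i j
  rcases eq_or_ne i j with rfl | h
  · fin_cases i <;> simp [← Complex.exp_add] <;> ring_nf
  · simp [Matrix.diagonal_apply_ne _ h]

/-- Let `k₁, k₂` be relatively prime positive integers. The map
`ψ : H³(ℤ) × ℝ → H³(ℝ) × SU(2)`, `ψ(N,t) = (N · U(0,0,k₂t), diag(e^{-2πik₁t}, e^{2πik₁t}))`,
is a group homomorphism whose image equals the set
`H = { (U(a,b,c+k₂t), diag(e^{-2πik₁t}, e^{2πik₁t})) : a,b,c ∈ ℤ, t ∈ ℝ }`. -/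
theorem psi_monoidHom_range (k₁ k₂ : ℕ) (hk₁ : 0 < k₁) (hk₂ : 0 < k₂)
    (hcop : Nat.Coprime k₁ k₂) :
    ∃ ψ : Heis ℤ × Multiplicative ℝ →* Heis ℝ × SU2,
      (∀ (N : Heis ℤ) (t : ℝ),
        ψ (N, Multiplicative.ofAdd t) =
          (Heis.castHom N * ⟨0, 0, (k₂ : ℝ) * t⟩, su2diag (2 * Real.pi * (k₁ : ℝ) * t))) ∧
      Set.range ψ = Hset k₁ k₂ := by
  refine ⟨{
    toFun := fun p => (Heis.castHom p.1 * ⟨0, 0, (k₂ : ℝ) * p.2.toAdd⟩,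
      su2diag (2 * Real.pi * (k₁ : ℝ) * p.2.toAdd))
    map_one' := by
      have h0 : (2 * Real.pi * (k₁ : ℝ) * (1 : Multiplicative ℝ).toAdd) = 0 := by simp
      refine Prod.ext ?_ ?_
      · show Heis.castHom 1 * (⟨0, 0, (k₂ : ℝ) * (1 : Multiplicative ℝ).toAdd⟩ : Heis ℝ) = 1
        ext <;> simp [Heis.castHom, Heis.one_def]
      · show su2diag (2 * Real.pi * (k₁ : ℝ) * Multiplicative.toAdd 1) = 1
        rw [h0, su2diag_zero]
    map_mul' := fun p q => by
      refine Prod.ext ?_ ?_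
      · show Heis.castHom (p.1 * q.1) * (⟨0, 0, _⟩ : Heis ℝ) = _
        ext <;> simp [Heis.castHom, toAdd_mul] <;> push_cast <;> ring
      · show su2diag _ = su2diag _ * su2diag _
        rw [← su2diag_add]
        congr 1
        simp [toAdd_mul]
        ring }, ?_, ?_⟩
  · intro N t; rfl
  · ext p
    constructor
    · rintro ⟨⟨N, t⟩, rfl⟩
      refine ⟨N.x, N.y, N.z, t.toAdd, Prod.ext ?_ rfl⟩
      ext <;> simp [Heis.castHom]
    · rintro ⟨a, b, c, t, rfl⟩
      refine ⟨(⟨a, b, c⟩, Multiplicative.ofAdd t), Prod.ext ?_ rfl⟩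
      ext <;> simp [Heis.castHom]
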